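/- arXiv:2004.09335 — 2 statements merged into one kernel-verified Lean document; each statement's English description precedes it below -/
import Mathlib

section
/- (Key identity behind Proposition 2.) Suppose X ⊆ ℝ^d, each score function x ↦ ∂_j^θ log p(θ,x) is twice differentiable in x, and q : X → ℝ (playing the role of the formal adjoint G^a[p(θ,·)] in L²(X,λ)) satisfies the adjoint identity ∫_X G[∂_j^θ log p(θ,·)](x) p(θ,x) dλ(x) = ∫_X ∂_j^θ log p(θ,x) q(x) dλ(x) for each j, with ∫_X |q(x)/p(θ,x) · ∂_j^θ log p(θ,x)| p(θ,x) dλ(x) < ∞. Then the projection of the square-root Fokker–Planck vector field v(x) = q(x)/(2√p(θ,x)) satisfies, pointwise in x, Π_θ v(x) = Σ_{i,j} (g⁻¹(θ))_{ij} E_θ[G[∂_j^θ log p(θ,·)]] ∂_i^θ √p(θ,x); that is, the projection filter parameter velocity is g⁻¹(θ) E_θ[G[∇_θ log p_θ]]. -/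
/-
Both velocities are computed against the same score functions: for a positive density,
`∂_j log p = 2 ∂_j √p / √p`, so `⟨q / (2√p), ∂_j √p⟩ = ¼ ∫ ∂_j log p · q`, and the adjoint
identity turns the right-hand side into `¼ E_θ[G[∂_j log p]]`. Summing against `g⁻¹` gives the
claim.
-/

open MeasureTheory

/-- The generator of the Itô diffusion with drift `a` and diffusion matrix `Q`:
`G[φ](x) = Σ_i a_i(x) ∂_i φ(x) + (1/2) Σ_{i,j} Q_{ij}(x) ∂²_{ij} φ(x)`. -/
noncomputable def generator {d : ℕ} (a : (Fin d → ℝ) → Fin d → ℝ)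
    (Q : (Fin d → ℝ) → Matrix (Fin d) (Fin d) ℝ)
    (φ : (Fin d → ℝ) → ℝ) (x : Fin d → ℝ) : ℝ :=
  (∑ i, a x i * fderiv ℝ φ x (Pi.single i 1)) +
    (1 / 2) * ∑ i, ∑ j, Q x i j *
      fderiv ℝ (fun y => fderiv ℝ φ y (Pi.single j 1)) x (Pi.single i 1)

theorem fderiv_log_eq_two_mul_fderiv_sqrt_div {E : Type*} [NormedAddCommGroup E]
    [NormedSpace ℝ E] {f : E → ℝ} {θ : E} (hf : DifferentiableAt ℝ f θ) (hpos : 0 < f θ)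
    (u : E) :
    fderiv ℝ (fun η => Real.log (f η)) θ u =
      2 * fderiv ℝ (fun η => Real.sqrt (f η)) θ u / Real.sqrt (f θ) := by
  rw [(hf.hasFDerivAt.log hpos.ne').fderiv, (hf.hasFDerivAt.sqrt hpos.ne').fderiv]
  have hsqrt_pos : 0 < Real.sqrt (f θ) := Real.sqrt_pos.mpr hpos
  simp only [FunLike.coe_smul, Pi.smul_apply, smul_eq_mul]
  field_simp
  rw [Real.sq_sqrt hpos.le, mul_comm]

theorem four_mul_integral_div_two_sqrt_mul_fderiv_sqrt {E α : Type*} [NormedAddCommGroup E]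
    [NormedSpace ℝ E] [MeasurableSpace α] (μ : Measure α) {p : E → α → ℝ} {θ : E}
    (hdiff : ∀ z, DifferentiableAt ℝ (fun η => p η z) θ) (hpos : ∀ z, 0 < p θ z)
    (q : α → ℝ) (u : E) :
    4 * ∫ z, q z / (2 * Real.sqrt (p θ z)) * fderiv ℝ (fun η => Real.sqrt (p η z)) θ u ∂μ =
      ∫ z, fderiv ℝ (fun η => Real.log (p η z)) θ u * q z ∂μ := by
  rw [← integral_const_mul]
  congr 1 with z
  have hsqrt_pos : 0 < Real.sqrt (p θ z) := Real.sqrt_pos.mpr (hpos z)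
  rw [fderiv_log_eq_two_mul_fderiv_sqrt_div (hdiff z) (hpos z)]
  field_simp
  ring

theorem projection_filter_prediction_identity_general
    {d m : ℕ}
    (lam : Measure (Fin d → ℝ))
    (a : (Fin d → ℝ) → Fin d → ℝ)
    (Q : (Fin d → ℝ) → Matrix (Fin d) (Fin d) ℝ)
    (p : (Fin m → ℝ) → (Fin d → ℝ) → ℝ)
    (hpos : ∀ θ x, 0 < p θ x)
    (hdiff : ∀ x, Differentiable ℝ (fun θ => p θ x))
    (θ : Fin m → ℝ)
    (g : Matrix (Fin m) (Fin m) ℝ)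
    -- `q` plays the role of the formal adjoint `G^a[p(θ,·)]` in `L²(X,λ)`
    (q : (Fin d → ℝ) → ℝ)
    (hadj : ∀ j : Fin m,
      ∫ x, generator a Q
          (fun z => fderiv ℝ (fun η => Real.log (p η z)) θ (Pi.single j 1)) x * p θ x ∂lam
        = ∫ x, fderiv ℝ (fun η => Real.log (p η x)) θ (Pi.single j 1) * q x ∂lam)
    (v : (Fin d → ℝ) → ℝ)
    (hv : ∀ x, v x = q x / (2 * Real.sqrt (p θ x)))
    (x : Fin d → ℝ) :
    (4 : ℝ) * ∑ i : Fin m, ∑ j : Fin m, g⁻¹ i j *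
        (∫ z, v z * fderiv ℝ (fun η => Real.sqrt (p η z)) θ (Pi.single j 1) ∂lam) *
        fderiv ℝ (fun η => Real.sqrt (p η x)) θ (Pi.single i 1)
      = ∑ i : Fin m, ∑ j : Fin m, g⁻¹ i j *
        (∫ z, generator a Q
            (fun w => fderiv ℝ (fun η => Real.log (p η w)) θ (Pi.single j 1)) z
          * p θ z ∂lam) *
        fderiv ℝ (fun η => Real.sqrt (p η x)) θ (Pi.single i 1) := by
  obtain rfl : v = fun z => q z / (2 * Real.sqrt (p θ z)) := funext hv
  have hcoord : ∀ j : Fin m,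
      4 * ∫ z, q z / (2 * Real.sqrt (p θ z)) *
          fderiv ℝ (fun η => Real.sqrt (p η z)) θ (Pi.single j 1) ∂lam =
        ∫ z, generator a Q
          (fun w => fderiv ℝ (fun η => Real.log (p η w)) θ (Pi.single j 1)) z * p θ z ∂lam :=
    fun j => by
      rw [four_mul_integral_div_two_sqrt_mul_fderiv_sqrt lam (fun z => (hdiff z).differentiableAt)
        (hpos θ), hadj]
  simp only [Finset.mul_sum, ← hcoord]
  refine Finset.sum_congr rfl fun i _ => Finset.sum_congr rfl fun j _ => ?_
  ring

/-- **key identity behind Proposition 2.** If `q` plays the role of the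
formal adjoint `G^a[p(θ,·)]` in `L²(X,λ)`, i.e.
`∫ G[∂_j^θ log p(θ,·)] p(θ,·) dλ = ∫ ∂_j^θ log p(θ,·) q dλ` for each `j`,
then the projection of the square-root Fokker–Planck vector field
`v = q/(2√p(θ,·))` satisfies, pointwise,
`Π_θ v = Σ_{i,j} (g⁻¹(θ))_{ij} E_θ[G[∂_j^θ log p_θ]] ∂_i^θ √p_θ`;
i.e. the projection filter parameter velocity is `g⁻¹(θ) E_θ[G[∇_θ log p_θ]]`. -/
theorem projection_filter_prediction_identity
    {X : Type*} [MeasurableSpace X] {d m : ℕ}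
    (lam : Measure (Fin d → ℝ))
    (a : (Fin d → ℝ) → Fin d → ℝ)
    (Q : (Fin d → ℝ) → Matrix (Fin d) (Fin d) ℝ)
    (p : (Fin m → ℝ) → (Fin d → ℝ) → ℝ)
    (hpos : ∀ θ x, 0 < p θ x)
    (hprob : ∀ θ, ∫ x, p θ x ∂lam = 1)
    (hdiff : ∀ x, Differentiable ℝ (fun θ => p θ x))
    (θ : Fin m → ℝ)
    -- each score function is twice differentiable in x
    (hscore : ∀ j : Fin m, ContDiff ℝ 2
      (fun x => fderiv ℝ (fun η => Real.log (p η x)) θ (Pi.single j 1)))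
    -- the Fisher information matrix, assumed invertible at θ
    (g : Matrix (Fin m) (Fin m) ℝ)
    (hg : ∀ i j, g i j =
      ∫ x, (fderiv ℝ (fun η => Real.log (p η x)) θ (Pi.single i 1)) *
           (fderiv ℝ (fun η => Real.log (p η x)) θ (Pi.single j 1)) * p θ x ∂lam)
    (hginv : IsUnit g.det)
    -- `q` plays the role of the formal adjoint `G^a[p(θ,·)]` in `L²(X,λ)`
    (q : (Fin d → ℝ) → ℝ)
    (hadj : ∀ j : Fin m,
      ∫ x, generator a Q
          (fun z => fderiv ℝ (fun η => Real.log (p η z)) θ (Pi.single j 1)) x * p θ x ∂lam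
        = ∫ x, fderiv ℝ (fun η => Real.log (p η x)) θ (Pi.single j 1) * q x ∂lam)
    (hint : ∀ j : Fin m, Integrable
      (fun x => |q x / p θ x * fderiv ℝ (fun η => Real.log (p η x)) θ (Pi.single j 1)|
        * p θ x) lam)
    (v : (Fin d → ℝ) → ℝ)
    (hv : ∀ x, v x = q x / (2 * Real.sqrt (p θ x)))
    (x : Fin d → ℝ) :
    (4 : ℝ) * ∑ i : Fin m, ∑ j : Fin m, g⁻¹ i j *
        (∫ z, v z * fderiv ℝ (fun η => Real.sqrt (p η z)) θ (Pi.single j 1) ∂lam) *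
        fderiv ℝ (fun η => Real.sqrt (p η x)) θ (Pi.single i 1)
      = ∑ i : Fin m, ∑ j : Fin m, g⁻¹ i j *
        (∫ z, generator a Q
            (fun w => fderiv ℝ (fun η => Real.log (p η w)) θ (Pi.single j 1)) z
          * p θ z ∂lam) *
        fderiv ℝ (fun η => Real.sqrt (p η x)) θ (Pi.single i 1) :=
  projection_filter_prediction_identity_general lam a Q p hpos hdiff θ g q hadj v hv x
end

section
/- For every θ ∈ ℝ³ with θ ≠ 0, the Fisher information matrix of the von Mises–Fisher family, g(θ) = (κ'(r)/r) P⊥(θ) + κ''(r) P(θ) with r = ‖θ‖, is symmetric positive definite. -/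
/-!
With `r = ‖θ‖` and `P` the orthogonal projection onto `ℝθ`, the matrix is `a (1 - P) + b P` with
`a = κ'(r)/r` and `b = κ''(r)`. Splitting it as `c • 1 + (a - c) (1 - P) + (b - c) P` with
`c = min a b` shows that it is positive definite once `a, b > 0`, and these two inequalities are
`sinh r < r cosh r` and `r < sinh r`.
-/

open Matrix Real

theorem Real.sinh_lt_mul_cosh {x : ℝ} (hx : 0 < x) : sinh x < x * cosh x := by
  have hmono : StrictMonoOn (fun y ↦ y * cosh y - sinh y) (Set.Ici 0) := by
    refine strictMonoOn_of_hasDerivWithinAt_pos (convex_Ici 0) (by fun_prop)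
      (f' := fun y ↦ y * sinh y) (fun y _ ↦ ?_) fun y hy ↦ ?_
    · exact (((hasDerivAt_id' y).mul (hasDerivAt_cosh y)).sub (hasDerivAt_sinh y)).congr_deriv
        (by ring) |>.hasDerivWithinAt
    · rw [interior_Ici] at hy
      exact mul_pos hy (sinh_pos_iff.2 hy)
  simpa using hmono Set.self_mem_Ici hx.le hx

theorem Real.coth_sub_inv_div_pos {x : ℝ} (hx : 0 < x) : 0 < (cosh x / sinh x - 1 / x) / x := by
  refine div_pos ?_ hx
  rw [sub_pos, div_lt_div_iff₀ hx (sinh_pos_iff.2 hx), one_mul, mul_comm]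
  exact sinh_lt_mul_cosh hx

theorem Real.inv_sq_sub_inv_sinh_sq_pos {x : ℝ} (hx : 0 < x) : 0 < 1 / x ^ 2 - 1 / sinh x ^ 2 :=
  sub_pos.2 <| one_div_lt_one_div_of_lt (by positivity) <|
    pow_lt_pow_left₀ (self_lt_sinh_iff.2 hx) hx.le two_ne_zero

theorem Matrix.IsHermitian.posSemidef_of_isIdempotentElem {n R : Type*} [Fintype n] [CommRing R]
    [PartialOrder R] [StarRing R] [StarOrderedRing R] {E : Matrix n n R} (hE : E.IsHermitian)
    (hEE : IsIdempotentElem E) : E.PosSemidef := by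
  have hE' : E = Eᴴ * E := by rw [hE.eq, hEE.eq]
  exact hE' ▸ posSemidef_conjTranspose_mul_self E

theorem Matrix.IsHermitian.posDef_smul_one_sub_add_smul {n R : Type*} [Fintype n] [DecidableEq n]
    [CommRing R] [LinearOrder R] [IsStrictOrderedRing R] [StarRing R] [StarOrderedRing R]
    {P : Matrix n n R} (hP : P.IsHermitian) (hPP : IsIdempotentElem P) {a b : R} (ha : 0 < a)
    (hb : 0 < b) : (a • (1 - P) + b • P).PosDef := by
  set c := min a b
  have hsplit : a • (1 - P) + b • P = c • 1 + ((a - c) • (1 - P) + (b - c) • P) := by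
    simp only [sub_smul, smul_sub]
    abel
  rw [hsplit]
  refine (PosDef.one.smul (lt_min ha hb)).add_posSemidef (.add ?_ ?_)
  · exact ((isHermitian_one.sub hP).posSemidef_of_isIdempotentElem hPP.one_sub).smul
      (sub_nonneg.2 (min_le_left a b))
  · exact (hP.posSemidef_of_isIdempotentElem hPP).smul (sub_nonneg.2 (min_le_right a b))

namespace EuclideanSpace

variable {n : Type*} [Fintype n]

noncomputable def lineProjMatrix (θ : EuclideanSpace ℝ n) : Matrix n n ℝ :=
  of fun i j ↦ θ i * θ j / ‖θ‖ ^ 2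

theorem isHermitian_lineProjMatrix (θ : EuclideanSpace ℝ n) : (lineProjMatrix θ).IsHermitian := by
  rw [isHermitian_iff_isSymm]
  ext i j
  simp [lineProjMatrix, mul_comm]

theorem isIdempotentElem_lineProjMatrix {θ : EuclideanSpace ℝ n} (hθ : θ ≠ 0) :
    IsIdempotentElem (lineProjMatrix θ) := by
  have hr : ‖θ‖ ≠ 0 := norm_ne_zero_iff.2 hθ
  ext i j
  calc ∑ k, θ i * θ k / ‖θ‖ ^ 2 * (θ k * θ j / ‖θ‖ ^ 2)
      = θ i * θ j / ‖θ‖ ^ 4 * ∑ k, θ k ^ 2 := by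
        rw [Finset.mul_sum]
        exact Finset.sum_congr rfl fun k _ ↦ by ring
    _ = θ i * θ j / ‖θ‖ ^ 2 := by
        rw [← real_norm_sq_eq]
        field_simp

end EuclideanSpace

/-- For every `θ ∈ ℝ³`, `θ ≠ 0`, the Fisher information matrix of the
von Mises–Fisher family, `g(θ) = (κ'(r)/r) P⊥(θ) + κ''(r) P(θ)` with `r = ‖θ‖`,
`κ'(r) = coth r − 1/r` and `κ''(r) = 1/r² − 1/sinh²r`, is symmetric positive definite. -/
theorem vmf_fisher_posdef
    (θ : EuclideanSpace ℝ (Fin 3)) (hθ : θ ≠ 0)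
    (P Pperp g : Matrix (Fin 3) (Fin 3) ℝ)
    (hP : P = Matrix.of fun i j => θ i * θ j / ‖θ‖ ^ 2)
    (hPperp : Pperp = 1 - P)
    (hgdef : g = ((Real.cosh ‖θ‖ / Real.sinh ‖θ‖ - 1 / ‖θ‖) / ‖θ‖) • Pperp
      + (1 / ‖θ‖ ^ 2 - 1 / Real.sinh ‖θ‖ ^ 2) • P) :
    g.IsSymm ∧ g.PosDef := by
  have hr : 0 < ‖θ‖ := norm_pos_iff.2 hθ
  have hg : g.PosDef := by
    rw [hgdef, hPperp, hP]
    exact (EuclideanSpace.isHermitian_lineProjMatrix θ).posDef_smul_one_sub_add_smul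
      (EuclideanSpace.isIdempotentElem_lineProjMatrix hθ) (coth_sub_inv_div_pos hr)
      (inv_sq_sub_inv_sinh_sq_pos hr)
  exact ⟨isHermitian_iff_isSymm.1 hg.isHermitian, hg⟩
end
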